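/- Let S be an ai-semiring with multiplicative identity 1 containing (a copy of) M₂ in its generated variety, and suppose the word xyxztz is an isoterm for S. Then for every positive integer n, the word w_n is an isoterm for S. -/
import Mathlib


/-- An additively idempotent semiring. -/
class AISemiring (S : Type*) extends Add S, Mul S where
  add_assoc : ∀ a b c : S, a + b + c = a + (b + c)
  add_comm : ∀ a b : S, a + b = b + a
  add_idem : ∀ a : S, a + a = a
  mul_assoc : ∀ a b c : S, a * b * c = a * (b * c)
  left_distrib : ∀ a b c : S, a * (b + c) = a * b + a * c
  right_distrib : ∀ a b c : S, (a + b) * c = a * c + b * c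

/-- The two-element flat semiring `M₂ = M(ε)`: a trivial monoid `{e}` with an
adjoined zero `z`, with flat addition. -/
inductive M2 : Type
  | z | e
deriving DecidableEq

/-- Multiplication of `M₂`. -/
def m2mul : M2 → M2 → M2
  | M2.e, M2.e => M2.e
  | _, _ => M2.z

/-- Addition of `M₂` (flat: `x + x = x`, distinct elements sum to `0`). -/
def m2add : M2 → M2 → M2
  | M2.e, M2.e => M2.e
  | M2.z, M2.z => M2.z
  | _, _ => M2.z

/-- Evaluate a (nonempty) word in a magma under an assignment; the empty word
gets the junk value `z`. -/
def evalWith {S V : Type*} (mul : S → S → S) (z : S) (φ : V → S) : List V → S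
  | [] => z
  | h :: t => t.foldl (fun s v => mul s (φ v)) (φ h)

/-- Evaluate an ai-semiring term, presented as a (nonempty) list of (nonempty)
words, as the sum of the evaluations of its words. -/
def termEval {S V : Type*} (mul add : S → S → S) (z : S) (φ : V → S) :
    List (List V) → S
  | [] => z
  | [w] => evalWith mul z φ w
  | w :: rest => add (evalWith mul z φ w) (termEval mul add z φ rest)

/-- The variables: `xᵢ` is encoded as `2 * i` and `yⱼ` as `2 * j + 1`. -/
def wordWN (n : ℕ) : List ℕ :=
  [2 * 0 + 1, 2 * 1, 2 * 2, 2 * 0 + 1] ++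
  ((List.range n).flatMap fun k => [2 * (k+1) + 1, 2 * (k+3), 2 * (k+1) + 1]) ++
  [2 * (n+1) + 1, 2 * (n+3), 2 * (n+4), 2 * (n+1) + 1]

/-- The word `xyxztz` over the variables `x, y, z, t = 0, 1, 2, 3`. -/
def wordXYXZTZ : List ℕ := [0, 1, 0, 2, 3, 2]

/- ============ generic list auxiliary lemmas ============ -/

lemma s_fm_nil (b : ℕ → List ℕ) : ∀ m : ℕ, (∀ k < m, b k = []) → (List.range m).flatMap b = [] := by
  intro m
  induction m with
  | zero => intro _; rfl
  | succ m ih =>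
    intro h
    rw [List.range_succ, List.flatMap_append, ih (fun k hk => h k (by omega))]
    simp [h m (by omega)]

lemma s_fm_one (b : ℕ → List ℕ) (c : ℕ) : ∀ m : ℕ, c < m → (∀ k < m, k ≠ c → b k = []) →
    (List.range m).flatMap b = b c := by
  intro m
  induction m with
  | zero => omega
  | succ m ih =>
    intro hc h
    rw [List.range_succ, List.flatMap_append]
    by_cases hcm : c = m
    · subst hcm
      rw [s_fm_nil b _ (fun k hk => h k (by omega) (by omega))]
      simp
    · rw [ih (by omega) (fun k hk hkc => h k (by omega) hkc)]
      simp [h m (by omega) (by omega)]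

lemma s_fm_two (b : ℕ → List ℕ) (c d : ℕ) (hcd : c < d) : ∀ m : ℕ, d < m →
    (∀ k < m, k ≠ c → k ≠ d → b k = []) → (List.range m).flatMap b = b c ++ b d := by
  intro m
  induction m with
  | zero => omega
  | succ m ih =>
    intro hd h
    rw [List.range_succ, List.flatMap_append]
    by_cases hdm : d = m
    · subst hdm
      rw [s_fm_one b c _ hcd (fun k hk hkc => h k (by omega) hkc (by omega))]
      simp
    · rw [ih (by omega) (fun k hk h1 h2 => h k (by omega) h1 h2)]
      simp [h m (by omega) (by omega) (by omega)]

lemma s_fm_ne (σ : ℕ → List ℕ) (l : List ℕ) (x : ℕ) (hx : x ∈ l) (hσ : σ x ≠ []) :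
    l.flatMap σ ≠ [] := by
  intro h
  obtain ⟨y, hy⟩ := List.exists_mem_of_ne_nil _ hσ
  have : y ∈ l.flatMap σ := List.mem_flatMap.mpr ⟨x, hx, hy⟩
  rw [h] at this
  simp at this

lemma s_count_fm (σ : ℕ → List ℕ) (a p : ℕ) (h : ∀ v, (σ v).count p = if v = a then 1 else 0) :
    ∀ l : List ℕ, (l.flatMap σ).count p = l.count a := by
  intro l
  induction l with
  | nil => rfl
  | cons v t ih =>
    rw [List.flatMap_cons, List.count_append, ih, h v, List.count_cons]
    by_cases hv : v = a <;> simp [hv] <;> omega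

lemma s_count_filter (p : ℕ → Bool) (x : ℕ) (hx : p x = true) :
    ∀ l : List ℕ, (l.filter p).count x = l.count x := by
  intro l
  induction l with
  | nil => rfl
  | cons v t ih =>
    rw [List.filter_cons, List.count_cons]
    by_cases hv : p v = true
    · rw [if_pos hv, List.count_cons, ih]
    · rw [if_neg hv, ih]
      have : ¬ (v == x) = true := by
        intro hb
        exact hv (by rwa [show v = x from by simpa using hb])
      simp [this]

lemma s_filter_eq (x : ℕ) : ∀ l : List ℕ,
    l.filter (fun v => decide (v = x)) = List.replicate (l.count x) x := by
  intro l
  induction l with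
  | nil => rfl
  | cons v t ih =>
    rw [List.filter_cons, List.count_cons]
    by_cases hv : v = x
    · subst hv; simp [ih, List.replicate_succ]
    · simp [hv, ih]

lemma s_fm_filter (σ : ℕ → List ℕ) (a b : ℕ) (hoth : ∀ v, v ≠ a → v ≠ b → σ v = []) :
    ∀ l : List ℕ, l.flatMap σ = (l.filter (fun v => decide (v = a ∨ v = b))).flatMap σ := by
  intro l
  induction l with
  | nil => rfl
  | cons v t ih =>
    rw [List.flatMap_cons, List.filter_cons]
    by_cases hv : v = a ∨ v = b
    · rw [if_pos (by simpa using hv), List.flatMap_cons, ih]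
    · push_neg at hv
      rw [if_neg (by simpa using hv), hoth v hv.1 hv.2, ih]
      rfl

lemma s_pair_filter (σ : ℕ → List ℕ) (a b p q : ℕ) (hp : σ a = [p]) (hq : σ b = [q])
    (hpq : p ≠ q) (hoth : ∀ v, v ≠ a → v ≠ b → p ∉ σ v ∧ q ∉ σ v) :
    ∀ l : List ℕ, l.filter (fun v => decide (v = a ∨ v = b)) =
      ((l.flatMap σ).filter (fun x => decide (x = p ∨ x = q))).map
        (fun x => if x = p then a else b) := by
  intro l
  induction l with
  | nil => rfl
  | cons v t ih =>
    rw [List.flatMap_cons, List.filter_append, List.map_append, List.filter_cons]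
    by_cases hva : v = a
    · subst hva
      rw [if_pos (by simp), hp]
      have : List.filter (fun x => decide (x = p ∨ x = q)) [p] = [p] := by simp
      rw [this, ih]
      simp
    · by_cases hvb : v = b
      · subst hvb
        rw [if_pos (by simp), hq]
        have h1 : List.filter (fun x => decide (x = p ∨ x = q)) [q] = [q] := by simp
        rw [h1, ih]
        simp [Ne.symm hpq, fun h : q = p => hpq h.symm]
      · have h0 := hoth v hva hvb
        have hσv : List.filter (fun x => decide (x = p ∨ x = q)) (σ v) = [] :=
          List.filter_eq_nil_iff.mpr (fun x hx => by
            simp only [decide_eq_true_eq]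
            rintro (rfl | rfl)
            · exact h0.1 hx
            · exact h0.2 hx)
        rw [if_neg (by simp [hva, hvb]), hσv, ih]
        rfl

lemma s_len2 (a b : ℕ) (hab : a ≠ b) : ∀ l : List ℕ, (∀ v ∈ l, v = a ∨ v = b) →
    l.count a = 1 → l.count b = 1 → l = [a, b] ∨ l = [b, a] := by
  have hlen : ∀ l : List ℕ, (∀ v ∈ l, v = a ∨ v = b) → l.length = l.count a + l.count b := by
    intro l
    induction l with
    | nil => simp
    | cons v t ih =>
      intro h
      have ht := ih (fun x hx => h x (by simp [hx]))
      rcases h v (by simp) with rfl | rfl <;>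
        simp [List.count_cons, ht, hab, Ne.symm hab] <;> omega
  intro l hmem ha hb
  have h2 : l.length = 2 := by rw [hlen l hmem, ha, hb]
  match l, h2 with
  | [x, y], _ =>
    rcases hmem x (by simp) with rfl | rfl <;> rcases hmem y (by simp) with rfl | rfl
    · simp [List.count_cons] at ha
    · exact Or.inl rfl
    · exact Or.inr rfl
    · simp [List.count_cons] at hb

lemma s_pairproj : ∀ u w : List ℕ,
    (∀ a b : ℕ, u.filter (fun v => decide (v = a ∨ v = b)) =
      w.filter (fun v => decide (v = a ∨ v = b))) → u = w := by
  intro u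
  induction u with
  | nil =>
    intro w h
    cases w with
    | nil => rfl
    | cons d t =>
      exfalso
      have := h d d
      rw [List.filter_cons] at this
      simp at this
  | cons c t ih =>
    intro w h
    cases w with
    | nil =>
      exfalso
      have := h c c
      rw [List.filter_cons] at this
      simp at this
    | cons d t' =>
      have hcd := h c d
      rw [List.filter_cons, List.filter_cons, if_pos (by simp), if_pos (by simp)] at hcd
      injection hcd with h1 _
      subst h1
      have : t = t' := by
        apply ih
        intro a b
        have hab := h a b
        rw [List.filter_cons, List.filter_cons] at hab
        by_cases hP : c = a ∨ c = b
        · rw [if_pos (by simpa using hP), if_pos (by simpa using hP)] at hab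
          injection hab
        · rw [if_neg (by simpa using hP), if_neg (by simpa using hP)] at hab
          exact hab
      rw [this]
/- ============ evaluation lemmas ============ -/

section SEval

variable {S : Type*} [AISemiring S]

lemma s_foldl (one : S) (hone : ∀ s : S, one * s = s ∧ s * one = s) (φ : ℕ → S) :
    ∀ (t : List ℕ) (a : S),
      t.foldl (fun s v => s * φ v) a = a * evalWith (· * ·) one φ t := by
  intro t
  induction t with
  | nil => intro a; exact (hone a).2.symm
  | cons h t ih =>
    intro a
    rw [List.foldl_cons]
    rw [ih (a * φ h)]
    have h2 : evalWith (· * ·) one φ (h :: t) = φ h * evalWith (· * ·) one φ t := by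
      show t.foldl (fun s v => s * φ v) (φ h) = _
      exact ih (φ h)
    rw [h2, AISemiring.mul_assoc]

lemma s_eval_cons (one : S) (hone : ∀ s : S, one * s = s ∧ s * one = s) (φ : ℕ → S)
    (h : ℕ) (t : List ℕ) :
    evalWith (· * ·) one φ (h :: t) = φ h * evalWith (· * ·) one φ t := by
  show t.foldl (fun s v => s * φ v) (φ h) = _
  exact s_foldl one hone φ t (φ h)

lemma s_eval_append (one : S) (hone : ∀ s : S, one * s = s ∧ s * one = s) (φ : ℕ → S) :
    ∀ l1 l2 : List ℕ,
      evalWith (· * ·) one φ (l1 ++ l2) =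
        evalWith (· * ·) one φ l1 * evalWith (· * ·) one φ l2 := by
  intro l1
  induction l1 with
  | nil => intro l2; exact ((hone _).1).symm
  | cons h t ih =>
    intro l2
    rw [List.cons_append, s_eval_cons one hone, ih, s_eval_cons one hone,
      AISemiring.mul_assoc]

lemma s_eval_flatMap (one : S) (hone : ∀ s : S, one * s = s ∧ s * one = s) (φ : ℕ → S)
    (σ : ℕ → List ℕ) :
    ∀ l : List ℕ,
      evalWith (· * ·) one φ (l.flatMap σ) =
        evalWith (· * ·) one (fun v => evalWith (· * ·) one φ (σ v)) l := by
  intro l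
  induction l with
  | nil => rfl
  | cons h t ih =>
    rw [List.flatMap_cons, s_eval_append one hone, ih, s_eval_cons one hone]

end SEval

lemma s_m2mul_e (x y : M2) : m2mul x y = M2.e ↔ x = M2.e ∧ y = M2.e := by
  rcases x <;> rcases y <;> simp [m2mul]

lemma s_m2_foldl (ψ : ℕ → M2) : ∀ (t : List ℕ) (s : M2),
    (t.foldl (fun a v => m2mul a (ψ v)) s = M2.e ↔ s = M2.e ∧ ∀ v ∈ t, ψ v = M2.e) := by
  intro t
  induction t with
  | nil => intro s; simp
  | cons h t ih =>
    intro s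
    rw [List.foldl_cons, ih, s_m2mul_e]
    simp only [List.mem_cons]
    constructor
    · rintro ⟨⟨h1, h2⟩, h3⟩
      exact ⟨h1, fun v hv => by rcases hv with rfl | hv; exacts [h2, h3 v hv]⟩
    · rintro ⟨h1, h2⟩
      exact ⟨⟨h1, h2 h (Or.inl rfl)⟩, fun v hv => h2 v (Or.inr hv)⟩

lemma s_m2_eval (ψ : ℕ → M2) (l : List ℕ) :
    evalWith m2mul M2.e ψ l = M2.e ↔ ∀ v ∈ l, ψ v = M2.e := by
  cases l with
  | nil => simp [evalWith]
  | cons h t =>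
    show t.foldl (fun a v => m2mul a (ψ v)) (ψ h) = M2.e ↔ _
    rw [s_m2_foldl]
    simp only [List.mem_cons]
    constructor
    · rintro ⟨h1, h2⟩
      exact fun v hv => by rcases hv with rfl | hv; exacts [h1, h2 v hv]
    · intro h2
      exact ⟨h2 h (Or.inl rfl), fun v hv => h2 v (Or.inr hv)⟩

/- ============ word structure ============ -/

def sBlk (n c : ℕ) : List ℕ :=
  if c = 0 then [2 * 0 + 1, 2 * 1, 2 * 2, 2 * 0 + 1]
  else if c ≤ n then [2 * c + 1, 2 * (c + 2), 2 * c + 1]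
  else [2 * (n + 1) + 1, 2 * (n + 3), 2 * (n + 4), 2 * (n + 1) + 1]

lemma s_range_split (b : ℕ → List ℕ) : ∀ m : ℕ,
    (List.range (m + 2)).flatMap b =
      b 0 ++ (List.range m).flatMap (fun k => b (k + 1)) ++ b (m + 1) := by
  intro m
  induction m with
  | zero => simp [List.range_succ]
  | succ m ih =>
    rw [show m + 1 + 2 = (m + 2) + 1 from rfl, List.range_succ, List.flatMap_append, ih,
      List.range_succ, List.flatMap_append]
    simp [List.append_assoc]

lemma s_word_eq (n : ℕ) : wordWN n = (List.range (n + 2)).flatMap (sBlk n) := by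
  rw [s_range_split]
  have h0 : sBlk n 0 = [2 * 0 + 1, 2 * 1, 2 * 2, 2 * 0 + 1] := by simp [sBlk]
  have h1 : sBlk n (n + 1) = [2 * (n + 1) + 1, 2 * (n + 3), 2 * (n + 4), 2 * (n + 1) + 1] := by
    unfold sBlk
    rw [if_neg (by omega), if_neg (by omega)]
  have h2 : (List.range n).flatMap (fun k => sBlk n (k + 1)) =
      (List.range n).flatMap (fun k => [2 * (k + 1) + 1, 2 * (k + 3), 2 * (k + 1) + 1]) := by
    apply List.flatMap_congr ?_
    · intro k hk
      have hk' : k < n := List.mem_range.mp hk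
      unfold sBlk
      rw [if_neg (by omega), if_pos (by omega)]
  rw [h0, h1, h2]
  rfl

def sInB (n c j : ℕ) : Prop :=
  (c = 0 ∧ (j = 1 ∨ j = 2)) ∨ (1 ≤ c ∧ c ≤ n ∧ j = c + 2) ∨
    (c = n + 1 ∧ (j = n + 3 ∨ j = n + 4))

lemma sInB_lt {n c j d k : ℕ} (h1 : sInB n c j) (h2 : sInB n d k) (hcd : c < d) : j < k := by
  unfold sInB at h1 h2; omega

def sig4 (c j d k : ℕ) : ℕ → List ℕ := fun v =>
  if v = 2 * c + 1 then [0] else if v = 2 * j then [1]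
  else if v = 2 * d + 1 then [2] else if v = 2 * k then [3] else []

lemma sig4_at (c j d k : ℕ) (hcd : c < d) (hjk : j < k) :
    sig4 c j d k (2 * c + 1) = [0] ∧ sig4 c j d k (2 * j) = [1] ∧
      sig4 c j d k (2 * d + 1) = [2] ∧ sig4 c j d k (2 * k) = [3] := by
  refine ⟨?_, ?_, ?_, ?_⟩ <;> simp only [sig4] <;> split_ifs <;> first | rfl | omega

lemma sig4_nil (c j d k v : ℕ) (h1 : v ≠ 2 * c + 1) (h2 : v ≠ 2 * j) (h3 : v ≠ 2 * d + 1)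
    (h4 : v ≠ 2 * k) : sig4 c j d k v = [] := by
  simp [sig4, h1, h2, h3, h4]

lemma s_sig4_mem {c j d k p v : ℕ} (h : p ∈ sig4 c j d k v) :
    (p = 0 ∧ v = 2 * c + 1) ∨ (p = 1 ∧ v = 2 * j) ∨ (p = 2 ∧ v = 2 * d + 1) ∨
      (p = 3 ∧ v = 2 * k) := by
  unfold sig4 at h
  split_ifs at h with h1 h2 h3 h4
  · exact Or.inl ⟨by simpa using h, h1⟩
  · exact Or.inr (Or.inl ⟨by simpa using h, h2⟩)
  · exact Or.inr (Or.inr (Or.inl ⟨by simpa using h, h3⟩))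
  · exact Or.inr (Or.inr (Or.inr ⟨by simpa using h, h4⟩))
  · simp at h

lemma sig4_count (c j d k : ℕ) (hcd : c < d) (hjk : j < k) :
    (∀ v, (sig4 c j d k v).count 0 = if v = 2 * c + 1 then 1 else 0) ∧
    (∀ v, (sig4 c j d k v).count 1 = if v = 2 * j then 1 else 0) ∧
    (∀ v, (sig4 c j d k v).count 2 = if v = 2 * d + 1 then 1 else 0) ∧
    (∀ v, (sig4 c j d k v).count 3 = if v = 2 * k then 1 else 0) := by
  refine ⟨?_, ?_, ?_, ?_⟩ <;> intro v <;> simp only [sig4] <;> split_ifs <;>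
    first | rfl | omega | (exfalso; omega) | decide

lemma s_sig4_oth (c j d k p q a b : ℕ) (hpa : sig4 c j d k a = [p]) (hqb : sig4 c j d k b = [q]) :
    ∀ v, v ≠ a → v ≠ b → p ∉ sig4 c j d k v ∧ q ∉ sig4 c j d k v := by
  intro v h1 h2
  have hpm : p ∈ sig4 c j d k a := by rw [hpa]; simp
  have hqm : q ∈ sig4 c j d k b := by rw [hqb]; simp
  constructor <;> intro hm
  · rcases s_sig4_mem hm with h | h | h | h <;> rcases s_sig4_mem hpm with h' | h' | h' | h' <;> omega
  · rcases s_sig4_mem hm with h | h | h | h <;> rcases s_sig4_mem hqm with h' | h' | h' | h' <;> omega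
/- ============ flatMap of the word under the substitutions ============ -/

lemma blk_fm_other (n c j d k : ℕ) (hcd : c < d) (hd : d ≤ n + 1) (hcj : sInB n c j)
    (hdk : sInB n d k) :
    ∀ m, m < n + 2 → m ≠ c → m ≠ d → (sBlk n m).flatMap (sig4 c j d k) = [] := by
  have hcj' := hcj; have hdk' := hdk
  unfold sInB at hcj' hdk'
  intro m hm hmc hmd
  by_cases hm0 : m = 0
  · subst hm0
    have hb : sBlk n 0 = [2 * 0 + 1, 2 * 1, 2 * 2, 2 * 0 + 1] := by simp [sBlk]
    rw [hb]
    simp only [List.flatMap_cons, List.flatMap_nil, List.append_nil]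
    rw [sig4_nil c j d k (2 * 0 + 1) (by omega) (by omega) (by omega) (by omega),
      sig4_nil c j d k (2 * 1) (by omega) (by omega) (by omega) (by omega),
      sig4_nil c j d k (2 * 2) (by omega) (by omega) (by omega) (by omega)]
    rfl
  · by_cases hmn : m ≤ n
    · have hb : sBlk n m = [2 * m + 1, 2 * (m + 2), 2 * m + 1] := by
        unfold sBlk; rw [if_neg hm0, if_pos hmn]
      rw [hb]
      simp only [List.flatMap_cons, List.flatMap_nil, List.append_nil]
      rw [sig4_nil c j d k (2 * m + 1) (by omega) (by omega) (by omega) (by omega),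
        sig4_nil c j d k (2 * (m + 2)) (by omega) (by omega) (by omega) (by omega)]
      rfl
    · have hm1 : m = n + 1 := by omega
      subst hm1
      have hb : sBlk n (n + 1) = [2 * (n + 1) + 1, 2 * (n + 3), 2 * (n + 4), 2 * (n + 1) + 1] := by
        unfold sBlk; rw [if_neg (by omega), if_neg (by omega)]
      rw [hb]
      simp only [List.flatMap_cons, List.flatMap_nil, List.append_nil]
      rw [sig4_nil c j d k (2 * (n + 1) + 1) (by omega) (by omega) (by omega) (by omega),
        sig4_nil c j d k (2 * (n + 3)) (by omega) (by omega) (by omega) (by omega),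
        sig4_nil c j d k (2 * (n + 4)) (by omega) (by omega) (by omega) (by omega)]
      rfl

lemma blk_fm_c (n c j d k : ℕ) (hcd : c < d) (hd : d ≤ n + 1) (hcj : sInB n c j)
    (hdk : sInB n d k) : (sBlk n c).flatMap (sig4 c j d k) = [0, 1, 0] := by
  have hjk := sInB_lt hcj hdk hcd
  have hS := sig4_at c j d k hcd hjk
  have hcj' := hcj; have hdk' := hdk
  unfold sInB at hcj' hdk'
  rcases hcj with ⟨rfl, hj⟩ | ⟨hc1, hc2, rfl⟩ | ⟨rfl, hj⟩
  · have hb : sBlk n 0 = [2 * 0 + 1, 2 * 1, 2 * 2, 2 * 0 + 1] := by simp [sBlk]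
    rw [hb]
    simp only [List.flatMap_cons, List.flatMap_nil, List.append_nil]
    rcases hj with rfl | rfl
    · rw [hS.1, hS.2.1, sig4_nil 0 1 d k (2 * 2) (by omega) (by omega) (by omega) (by omega)]
      rfl
    · rw [hS.1, hS.2.1, sig4_nil 0 2 d k (2 * 1) (by omega) (by omega) (by omega) (by omega)]
      rfl
  · have hb : sBlk n c = [2 * c + 1, 2 * (c + 2), 2 * c + 1] := by
      unfold sBlk; rw [if_neg (by omega), if_pos hc2]
    rw [hb]
    simp only [List.flatMap_cons, List.flatMap_nil, List.append_nil]
    rw [hS.1, hS.2.1]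
    rfl
  · omega

lemma blk_fm_d (n c j d k : ℕ) (hcd : c < d) (hd : d ≤ n + 1) (hcj : sInB n c j)
    (hdk : sInB n d k) : (sBlk n d).flatMap (sig4 c j d k) = [2, 3, 2] := by
  have hjk := sInB_lt hcj hdk hcd
  have hS := sig4_at c j d k hcd hjk
  have hcj' := hcj; have hdk' := hdk
  unfold sInB at hcj' hdk'
  rcases hdk with ⟨rfl, hk⟩ | ⟨hd1, hd2, rfl⟩ | ⟨rfl, hk⟩
  · omega
  · have hb : sBlk n d = [2 * d + 1, 2 * (d + 2), 2 * d + 1] := by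
      unfold sBlk; rw [if_neg (by omega), if_pos hd2]
    rw [hb]
    simp only [List.flatMap_cons, List.flatMap_nil, List.append_nil]
    rw [hS.2.2.1, hS.2.2.2]
    rfl
  · have hb : sBlk n (n + 1) = [2 * (n + 1) + 1, 2 * (n + 3), 2 * (n + 4), 2 * (n + 1) + 1] := by
      unfold sBlk; rw [if_neg (by omega), if_neg (by omega)]
    rw [hb]
    simp only [List.flatMap_cons, List.flatMap_nil, List.append_nil]
    rcases hk with rfl | rfl
    · rw [hS.2.2.1, hS.2.2.2,
        sig4_nil c j (n + 1) (n + 3) (2 * (n + 4)) (by omega) (by omega) (by omega) (by omega)]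
      rfl
    · rw [hS.2.2.1, hS.2.2.2,
        sig4_nil c j (n + 1) (n + 4) (2 * (n + 3)) (by omega) (by omega) (by omega) (by omega)]
      rfl

lemma w_fm_main (n c j d k : ℕ) (hcd : c < d) (hd : d ≤ n + 1) (hcj : sInB n c j)
    (hdk : sInB n d k) : (wordWN n).flatMap (sig4 c j d k) = [0, 1, 0, 2, 3, 2] := by
  rw [s_word_eq, List.flatMap_assoc,
    s_fm_two _ c d hcd (n + 2) (by omega) (blk_fm_other n c j d k hcd hd hcj hdk),
    blk_fm_c n c j d k hcd hd hcj hdk, blk_fm_d n c j d k hcd hd hcj hdk]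
  rfl

/- ============ the two special substitutions ============ -/

def sig2a : ℕ → List ℕ := fun v =>
  if v = 2 * 1 then [0, 1] else if v = 2 * 2 then [0, 2, 3, 2] else []

def sig2b (n : ℕ) : ℕ → List ℕ := fun v =>
  if v = 2 * (n + 3) then [0, 1, 0, 2] else if v = 2 * (n + 4) then [3, 2] else []

lemma sig2a_nil (v : ℕ) (h1 : v ≠ 2 * 1) (h2 : v ≠ 2 * 2) : sig2a v = [] := by
  simp [sig2a, h1, h2]

lemma sig2b_nil (n v : ℕ) (h1 : v ≠ 2 * (n + 3)) (h2 : v ≠ 2 * (n + 4)) : sig2b n v = [] := by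
  simp [sig2b, h1, h2]

lemma w_fm_2a (n : ℕ) : (wordWN n).flatMap sig2a = [0, 1, 0, 2, 3, 2] := by
  rw [s_word_eq, List.flatMap_assoc, s_fm_one _ 0 (n + 2) (by omega) ?side]
  case side =>
    intro m hm hm0
    by_cases hmn : m ≤ n
    · have hb : sBlk n m = [2 * m + 1, 2 * (m + 2), 2 * m + 1] := by
        unfold sBlk; rw [if_neg hm0, if_pos hmn]
      rw [hb]
      simp only [List.flatMap_cons, List.flatMap_nil, List.append_nil]
      rw [sig2a_nil (2 * m + 1) (by omega) (by omega),
        sig2a_nil (2 * (m + 2)) (by omega) (by omega)]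
      rfl
    · have hm1 : m = n + 1 := by omega
      subst hm1
      have hb : sBlk n (n + 1) = [2 * (n + 1) + 1, 2 * (n + 3), 2 * (n + 4), 2 * (n + 1) + 1] := by
        unfold sBlk; rw [if_neg (by omega), if_neg (by omega)]
      rw [hb]
      simp only [List.flatMap_cons, List.flatMap_nil, List.append_nil]
      rw [sig2a_nil (2 * (n + 1) + 1) (by omega) (by omega),
        sig2a_nil (2 * (n + 3)) (by omega) (by omega),
        sig2a_nil (2 * (n + 4)) (by omega) (by omega)]
      rfl
  have hb : sBlk n 0 = [2 * 0 + 1, 2 * 1, 2 * 2, 2 * 0 + 1] := by simp [sBlk]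
  rw [hb]
  simp only [List.flatMap_cons, List.flatMap_nil, List.append_nil]
  rw [sig2a_nil (2 * 0 + 1) (by omega) (by omega)]
  rfl

lemma w_fm_2b (n : ℕ) : (wordWN n).flatMap (sig2b n) = [0, 1, 0, 2, 3, 2] := by
  rw [s_word_eq, List.flatMap_assoc, s_fm_one _ (n + 1) (n + 2) (by omega) ?side]
  case side =>
    intro m hm hm1
    by_cases hm0 : m = 0
    · subst hm0
      have hb : sBlk n 0 = [2 * 0 + 1, 2 * 1, 2 * 2, 2 * 0 + 1] := by simp [sBlk]
      rw [hb]
      simp only [List.flatMap_cons, List.flatMap_nil, List.append_nil]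
      rw [sig2b_nil n (2 * 0 + 1) (by omega) (by omega),
        sig2b_nil n (2 * 1) (by omega) (by omega),
        sig2b_nil n (2 * 2) (by omega) (by omega)]
      rfl
    · have hmn : m ≤ n := by omega
      have hb : sBlk n m = [2 * m + 1, 2 * (m + 2), 2 * m + 1] := by
        unfold sBlk; rw [if_neg hm0, if_pos hmn]
      rw [hb]
      simp only [List.flatMap_cons, List.flatMap_nil, List.append_nil]
      rw [sig2b_nil n (2 * m + 1) (by omega) (by omega),
        sig2b_nil n (2 * (m + 2)) (by omega) (by omega)]
      rfl
  have hb : sBlk n (n + 1) = [2 * (n + 1) + 1, 2 * (n + 3), 2 * (n + 4), 2 * (n + 1) + 1] := by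
    unfold sBlk; rw [if_neg (by omega), if_neg (by omega)]
  rw [hb]
  simp only [List.flatMap_cons, List.flatMap_nil, List.append_nil]
  rw [sig2b_nil n (2 * (n + 1) + 1) (by omega) (by omega)]
  have e1 : sig2b n (2 * (n + 3)) = [0, 1, 0, 2] := by simp [sig2b]
  have e2 : sig2b n (2 * (n + 4)) = [3, 2] := by
    unfold sig2b; rw [if_neg (by omega), if_pos rfl]
  rw [e1, e2]
  rfl

/- ============ membership characterization ============ -/

lemma s_memw (n v : ℕ) (hv : v ∈ wordWN n) :
    ∃ c j, c ≤ n + 1 ∧ sInB n c j ∧ (v = 2 * c + 1 ∨ v = 2 * j) := by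
  rw [s_word_eq] at hv
  obtain ⟨m, hm, hvm⟩ := List.mem_flatMap.mp hv
  have hm' : m < n + 2 := List.mem_range.mp hm
  by_cases hm0 : m = 0
  · subst hm0
    have hb : sBlk n 0 = [2 * 0 + 1, 2 * 1, 2 * 2, 2 * 0 + 1] := by simp [sBlk]
    rw [hb] at hvm
    simp only [List.mem_cons, List.not_mem_nil, or_false] at hvm
    rcases hvm with rfl | rfl | rfl | rfl
    · exact ⟨0, 1, by omega, by unfold sInB; omega, Or.inl rfl⟩
    · exact ⟨0, 1, by omega, by unfold sInB; omega, Or.inr rfl⟩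
    · exact ⟨0, 2, by omega, by unfold sInB; omega, Or.inr rfl⟩
    · exact ⟨0, 1, by omega, by unfold sInB; omega, Or.inl rfl⟩
  · by_cases hmn : m ≤ n
    · have hb : sBlk n m = [2 * m + 1, 2 * (m + 2), 2 * m + 1] := by
        unfold sBlk; rw [if_neg hm0, if_pos hmn]
      rw [hb] at hvm
      simp only [List.mem_cons, List.not_mem_nil, or_false] at hvm
      rcases hvm with rfl | rfl | rfl
      · exact ⟨m, m + 2, by omega, by unfold sInB; omega, Or.inl rfl⟩
      · exact ⟨m, m + 2, by omega, by unfold sInB; omega, Or.inr rfl⟩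
      · exact ⟨m, m + 2, by omega, by unfold sInB; omega, Or.inl rfl⟩
    · have hm1 : m = n + 1 := by omega
      subst hm1
      have hb : sBlk n (n + 1) = [2 * (n + 1) + 1, 2 * (n + 3), 2 * (n + 4), 2 * (n + 1) + 1] := by
        unfold sBlk; rw [if_neg (by omega), if_neg (by omega)]
      rw [hb] at hvm
      simp only [List.mem_cons, List.not_mem_nil, or_false] at hvm
      rcases hvm with rfl | rfl | rfl | rfl
      · exact ⟨n + 1, n + 3, by omega, by unfold sInB; omega, Or.inl rfl⟩
      · exact ⟨n + 1, n + 3, by omega, by unfold sInB; omega, Or.inr rfl⟩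
      · exact ⟨n + 1, n + 4, by omega, by unfold sInB; omega, Or.inr rfl⟩
      · exact ⟨n + 1, n + 3, by omega, by unfold sInB; omega, Or.inl rfl⟩

lemma s_mem_of_count {l : List ℕ} {x : ℕ} (h : l.count x ≠ 0) : x ∈ l := by
  by_contra h'
  rw [List.count_eq_zero_of_not_mem h'] at h
  exact h rfl
lemma s_samepair (σ : ℕ → List ℕ) (a b : ℕ) (hab : a ≠ b)
    (hoth : ∀ v, v ≠ a → v ≠ b → σ v = []) (l : List ℕ)
    (hfm : l.flatMap σ = [0, 1, 0, 2, 3, 2]) (hca : l.count a = 1) (hcb : l.count b = 1)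
    (hbad : σ b ++ σ a ≠ [0, 1, 0, 2, 3, 2]) :
    l.filter (fun v => decide (v = a ∨ v = b)) = [a, b] := by
  set f := l.filter (fun v => decide (v = a ∨ v = b)) with hf
  have hmem : ∀ v ∈ f, v = a ∨ v = b := fun v hv => by
    simpa using (List.mem_filter.mp hv).2
  have hfa : f.count a = 1 := by rw [hf, s_count_filter _ a (by simp)]; exact hca
  have hfb : f.count b = 1 := by rw [hf, s_count_filter _ b (by simp)]; exact hcb
  have hff : f.flatMap σ = [0, 1, 0, 2, 3, 2] := (s_fm_filter σ a b hoth l).symm.trans hfm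
  rcases s_len2 a b hab f hmem hfa hfb with h | h
  · exact h
  · exfalso
    rw [h] at hff
    simp only [List.flatMap_cons, List.flatMap_nil, List.append_nil] at hff
    exact hbad hff

/-- If `S` is an ai-semiring with a multiplicative identity such that `M₂`
belongs to the variety generated by `S` (every ai-semiring identity holding in
`S` holds in `M₂`) and `xyxztz` is an isoterm for `S`, then every word `wₙ`
(`n ≥ 1`) is an isoterm for `S`. -/
theorem stmt18 {S : Type*} [AISemiring S] (one : S)
    (hone : ∀ s : S, one * s = s ∧ s * one = s)
    (hM2 : ∀ p q : List (List ℕ), p ≠ [] → q ≠ [] →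
      (∀ w ∈ p, w ≠ ([] : List ℕ)) → (∀ w ∈ q, w ≠ ([] : List ℕ)) →
      (∀ φ : ℕ → S,
        termEval (· * ·) (· + ·) one φ p = termEval (· * ·) (· + ·) one φ q) →
      ∀ ψ : ℕ → M2, termEval m2mul m2add M2.e ψ p = termEval m2mul m2add M2.e ψ q)
    (hiso : ∀ u : List ℕ, u ≠ [] →
      (∀ φ : ℕ → S,
        evalWith (· * ·) one φ u + evalWith (· * ·) one φ wordXYXZTZ =
          evalWith (· * ·) one φ wordXYXZTZ) →
      u = wordXYXZTZ) :
    ∀ n : ℕ, 1 ≤ n → ∀ u : List ℕ, u ≠ [] →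
      (∀ φ : ℕ → S,
        evalWith (· * ·) one φ u + evalWith (· * ·) one φ (wordWN n) =
          evalWith (· * ·) one φ (wordWN n)) →
      u = wordWN n := by
  intro n hn u hune hu
  have hwne : wordWN n ≠ [] := by unfold wordWN; simp
  -- Step 1: every variable of u occurs in wₙ (via M₂).
  have hsub : ∀ v ∈ u, v ∈ wordWN n := by
    have h2 := hM2 [u, wordWN n] [wordWN n] (by simp) (by simp)
      (by
        intro x hx
        simp only [List.mem_cons, List.not_mem_nil, or_false] at hx
        rcases hx with rfl | rfl
        exacts [hune, hwne])
      (by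
        intro x hx
        simp only [List.mem_cons, List.not_mem_nil, or_false] at hx
        rcases hx with rfl
        exact hwne)
      (fun φ => by
        show evalWith (· * ·) one φ u + evalWith (· * ·) one φ (wordWN n) =
          evalWith (· * ·) one φ (wordWN n)
        exact hu φ)
    intro v hv
    by_contra hvw
    have h3 : m2add (evalWith m2mul M2.e (fun x => if x ∈ wordWN n then M2.e else M2.z) u)
        (evalWith m2mul M2.e (fun x => if x ∈ wordWN n then M2.e else M2.z) (wordWN n)) =
        evalWith m2mul M2.e (fun x => if x ∈ wordWN n then M2.e else M2.z) (wordWN n) :=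
      h2 (fun x => if x ∈ wordWN n then M2.e else M2.z)
    have hw_e : evalWith m2mul M2.e (fun x => if x ∈ wordWN n then M2.e else M2.z)
        (wordWN n) = M2.e := (s_m2_eval _ _).mpr (fun x hx => if_pos hx)
    rw [hw_e] at h3
    have hu_e : evalWith m2mul M2.e (fun x => if x ∈ wordWN n then M2.e else M2.z) u = M2.e := by
      rcases hval : evalWith m2mul M2.e (fun x => if x ∈ wordWN n then M2.e else M2.z) u with _ | _
      · rw [hval] at h3; simp [m2add] at h3
      · rfl
    have := (s_m2_eval _ u).mp hu_e v hv
    rw [if_neg hvw] at this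
    simp at this
  -- Step 2: substitution instances of the isoterm.
  have KEY : ∀ σ : ℕ → List ℕ, (wordWN n).flatMap σ = [0, 1, 0, 2, 3, 2] →
      u.flatMap σ ≠ [] → u.flatMap σ = [0, 1, 0, 2, 3, 2] := by
    intro σ hw hne
    apply hiso _ hne
    intro φ
    show evalWith (· * ·) one φ (u.flatMap σ) + evalWith (· * ·) one φ wordXYXZTZ =
      evalWith (· * ·) one φ wordXYXZTZ
    have hwx : wordXYXZTZ = (wordWN n).flatMap σ := hw.symm
    rw [hwx, s_eval_flatMap one hone φ σ u, s_eval_flatMap one hone φ σ (wordWN n)]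
    exact hu _
  have U4 : ∀ c j d k, c < d → d ≤ n + 1 → sInB n c j → sInB n d k →
      (2 * c + 1 ∈ u ∨ 2 * j ∈ u ∨ 2 * d + 1 ∈ u ∨ 2 * k ∈ u) →
      u.flatMap (sig4 c j d k) = [0, 1, 0, 2, 3, 2] := by
    intro c j d k hcd hd hcj hdk hmem
    have hjk := sInB_lt hcj hdk hcd
    have hS := sig4_at c j d k hcd hjk
    apply KEY _ (w_fm_main n c j d k hcd hd hcj hdk)
    rcases hmem with h | h | h | h
    · exact s_fm_ne _ _ _ h (by rw [hS.1]; simp)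
    · exact s_fm_ne _ _ _ h (by rw [hS.2.1]; simp)
    · exact s_fm_ne _ _ _ h (by rw [hS.2.2.1]; simp)
    · exact s_fm_ne _ _ _ h (by rw [hS.2.2.2]; simp)
  -- Step 3: the variable y₀ occurs in u.
  have hY0 : (2 * 0 + 1 : ℕ) ∈ u := by
    obtain ⟨v0, hv0⟩ := List.exists_mem_of_ne_nil u hune
    obtain ⟨c, j, hc, hcj, hform⟩ := s_memw n v0 (hsub v0 hv0)
    by_cases hc0 : c = 0
    · subst hc0
      have h4 := U4 0 j (n + 1) (n + 3) (by omega) (by omega) hcj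
        (by unfold sInB; omega)
        (by rcases hform with rfl | rfl; exacts [Or.inl hv0, Or.inr (Or.inl hv0)])
      have h0 : (0 : ℕ) ∈ u.flatMap (sig4 0 j (n + 1) (n + 3)) := by rw [h4]; simp
      obtain ⟨x, hxu, hx0⟩ := List.mem_flatMap.mp h0
      rcases s_sig4_mem hx0 with ⟨_, rfl⟩ | ⟨h, _⟩ | ⟨h, _⟩ | ⟨h, _⟩
      · exact hxu
      all_goals omega
    · have h4 := U4 0 1 c j (by omega) hc (by unfold sInB; omega) hcj
        (by rcases hform with rfl | rfl;
            exacts [Or.inr (Or.inr (Or.inl hv0)), Or.inr (Or.inr (Or.inr hv0))])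
      have h0 : (0 : ℕ) ∈ u.flatMap (sig4 0 1 c j) := by rw [h4]; simp
      obtain ⟨x, hxu, hx0⟩ := List.mem_flatMap.mp h0
      rcases s_sig4_mem hx0 with ⟨_, rfl⟩ | ⟨h, _⟩ | ⟨h, _⟩ | ⟨h, _⟩
      · exact hxu
      all_goals omega
  -- Step 4: occurrence counts in u.
  have CNT : ∀ c j, c ≤ n + 1 → sInB n c j →
      u.count (2 * c + 1) = 2 ∧ u.count (2 * j) = 1 := by
    intro c j hc hcj
    by_cases hc0 : c = 0
    · subst hc0
      have hdk : sInB n (n + 1) (n + 3) := by unfold sInB; omega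
      have h4 := U4 0 j (n + 1) (n + 3) (by omega) (by omega) hcj hdk (Or.inl hY0)
      have hjk := sInB_lt hcj hdk (by omega)
      have hcnt := sig4_count 0 j (n + 1) (n + 3) (by omega) hjk
      constructor
      · have t1 := s_count_fm _ _ _ hcnt.1 u
        rw [h4] at t1
        rw [← t1]
        decide
      · have t1 := s_count_fm _ _ _ hcnt.2.1 u
        rw [h4] at t1
        rw [← t1]
        decide
    · have hcj0 : sInB n 0 1 := by unfold sInB; omega
      have h4 := U4 0 1 c j (by omega) hc hcj0 hcj (Or.inl hY0)
      have hjk := sInB_lt hcj0 hcj (by omega)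
      have hcnt := sig4_count 0 1 c j (by omega) hjk
      constructor
      · have t1 := s_count_fm _ _ _ hcnt.2.2.1 u
        rw [h4] at t1
        rw [← t1]
        decide
      · have t1 := s_count_fm _ _ _ hcnt.2.2.2 u
        rw [h4] at t1
        rw [← t1]
        decide
  have MEM : ∀ c j, c ≤ n + 1 → sInB n c j → (2 * c + 1) ∈ u ∧ (2 * j) ∈ u := by
    intro c j hc hcj
    obtain ⟨h1, h2⟩ := CNT c j hc hcj
    exact ⟨s_mem_of_count (by omega), s_mem_of_count (by omega)⟩
  -- Step 5: counts agree with wₙ.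
  have COUNT : ∀ x, u.count x = (wordWN n).count x := by
    intro x
    by_cases hx : x ∈ wordWN n
    · obtain ⟨c, j, hc, hcj, hform⟩ := s_memw n x hx
      by_cases hc0 : c = 0
      · subst hc0
        have hdk : sInB n (n + 1) (n + 3) := by unfold sInB; omega
        have hu4 := U4 0 j (n + 1) (n + 3) (by omega) (by omega) hcj hdk (Or.inl hY0)
        have hw4 := w_fm_main n 0 j (n + 1) (n + 3) (by omega) (by omega) hcj hdk
        have hjk := sInB_lt hcj hdk (by omega)
        have hcnt := sig4_count 0 j (n + 1) (n + 3) (by omega) hjk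
        rcases hform with rfl | rfl
        · have t1 := s_count_fm _ _ _ hcnt.1 u
          have t2 := s_count_fm _ _ _ hcnt.1 (wordWN n)
          rw [hu4] at t1
          rw [hw4] at t2
          rw [← t1, ← t2]
        · have t1 := s_count_fm _ _ _ hcnt.2.1 u
          have t2 := s_count_fm _ _ _ hcnt.2.1 (wordWN n)
          rw [hu4] at t1
          rw [hw4] at t2
          rw [← t1, ← t2]
      · have hcj0 : sInB n 0 1 := by unfold sInB; omega
        have hu4 := U4 0 1 c j (by omega) hc hcj0 hcj (Or.inl hY0)
        have hw4 := w_fm_main n 0 1 c j (by omega) hc hcj0 hcj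
        have hjk := sInB_lt hcj0 hcj (by omega)
        have hcnt := sig4_count 0 1 c j (by omega) hjk
        rcases hform with rfl | rfl
        · have t1 := s_count_fm _ _ _ hcnt.2.2.1 u
          have t2 := s_count_fm _ _ _ hcnt.2.2.1 (wordWN n)
          rw [hu4] at t1
          rw [hw4] at t2
          rw [← t1, ← t2]
        · have t1 := s_count_fm _ _ _ hcnt.2.2.2 u
          have t2 := s_count_fm _ _ _ hcnt.2.2.2 (wordWN n)
          rw [hu4] at t1
          rw [hw4] at t2
          rw [← t1, ← t2]
    · have h1 : x ∉ u := fun h => hx (hsub x h)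
      rw [List.count_eq_zero_of_not_mem h1, List.count_eq_zero_of_not_mem hx]
  -- Step 6: pairwise projections.
  have P4 : ∀ c j d k a b p q, c < d → d ≤ n + 1 → sInB n c j → sInB n d k →
      sig4 c j d k a = [p] → sig4 c j d k b = [q] → p ≠ q →
      u.filter (fun v => decide (v = a ∨ v = b)) =
        (wordWN n).filter (fun v => decide (v = a ∨ v = b)) := by
    intro c j d k a b p q hcd hd hcj hdk hpa hqb hpq
    have hu4 := U4 c j d k hcd hd hcj hdk (Or.inl (MEM c j (by omega) hcj).1)
    have hw4 := w_fm_main n c j d k hcd hd hcj hdk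
    rw [s_pair_filter _ a b p q hpa hqb hpq (s_sig4_oth c j d k p q a b hpa hqb) u,
      s_pair_filter _ a b p q hpa hqb hpq (s_sig4_oth c j d k p q a b hpa hqb) (wordWN n),
      hu4, hw4]
  have hcomm : ∀ (l : List ℕ) (a b : ℕ),
      l.filter (fun v => decide (v = a ∨ v = b)) =
        l.filter (fun v => decide (v = b ∨ v = a)) := by
    intro l a b
    exact List.filter_congr (fun x _ => decide_eq_decide.mpr or_comm)
  have SING : ∀ x, u.filter (fun v => decide (v = x)) =
      (wordWN n).filter (fun v => decide (v = x)) := by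
    intro x
    rw [s_filter_eq, s_filter_eq, COUNT]
  -- distinct home blocks
  have HLT : ∀ a b ca ja cb jb, ca < cb → cb ≤ n + 1 → sInB n ca ja → sInB n cb jb →
      (a = 2 * ca + 1 ∨ a = 2 * ja) → (b = 2 * cb + 1 ∨ b = 2 * jb) →
      u.filter (fun v => decide (v = a ∨ v = b)) =
        (wordWN n).filter (fun v => decide (v = a ∨ v = b)) := by
    intro a b ca ja cb jb hlt hcb hcja hcjb hfa hfb
    have hjk := sInB_lt hcja hcjb hlt
    have hS := sig4_at ca ja cb jb hlt hjk
    rcases hfa with rfl | rfl <;> rcases hfb with rfl | rfl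
    · exact P4 ca ja cb jb _ _ 0 2 hlt hcb hcja hcjb hS.1 hS.2.2.1 (by omega)
    · exact P4 ca ja cb jb _ _ 0 3 hlt hcb hcja hcjb hS.1 hS.2.2.2 (by omega)
    · exact P4 ca ja cb jb _ _ 1 2 hlt hcb hcja hcjb hS.2.1 hS.2.2.1 (by omega)
    · exact P4 ca ja cb jb _ _ 1 3 hlt hcb hcja hcjb hS.2.1 hS.2.2.2 (by omega)
  -- same home block, y-x pair
  have HYX : ∀ c jj, c ≤ n + 1 → sInB n c jj →
      u.filter (fun v => decide (v = 2 * c + 1 ∨ v = 2 * jj)) =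
        (wordWN n).filter (fun v => decide (v = 2 * c + 1 ∨ v = 2 * jj)) := by
    intro c jj hc hcjj
    by_cases hc0 : c = 0
    · subst hc0
      have hdk : sInB n (n + 1) (n + 3) := by unfold sInB; omega
      have hS := sig4_at 0 jj (n + 1) (n + 3) (by omega) (sInB_lt hcjj hdk (by omega))
      exact P4 0 jj (n + 1) (n + 3) _ _ 0 1 (by omega) (by omega) hcjj hdk hS.1 hS.2.1 (by omega)
    · have hcj0 : sInB n 0 1 := by unfold sInB; omega
      have hS := sig4_at 0 1 c jj (by omega) (sInB_lt hcj0 hcjj (by omega))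
      exact P4 0 1 c jj _ _ 2 3 (by omega) hc hcj0 hcjj hS.2.2.1 hS.2.2.2 (by omega)
  -- same block x-x pairs
  have H12 : u.filter (fun v => decide (v = 2 * 1 ∨ v = 2 * 2)) =
      (wordWN n).filter (fun v => decide (v = 2 * 1 ∨ v = 2 * 2)) := by
    have hcj1 : sInB n 0 1 := by unfold sInB; omega
    have hcj2 : sInB n 0 2 := by unfold sInB; omega
    have hufm : u.flatMap sig2a = [0, 1, 0, 2, 3, 2] :=
      KEY sig2a (w_fm_2a n)
        (s_fm_ne _ _ (2 * 1) (MEM 0 1 (by omega) hcj1).2 (by simp [sig2a]))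
    have h1 := s_samepair sig2a (2 * 1) (2 * 2) (by omega)
      (fun v h1 h2 => sig2a_nil v h1 h2) u hufm
      (CNT 0 1 (by omega) hcj1).2 (CNT 0 2 (by omega) hcj2).2 (by decide)
    have h2 := s_samepair sig2a (2 * 1) (2 * 2) (by omega)
      (fun v h1 h2 => sig2a_nil v h1 h2) (wordWN n) (w_fm_2a n)
      (by rw [← COUNT]; exact (CNT 0 1 (by omega) hcj1).2)
      (by rw [← COUNT]; exact (CNT 0 2 (by omega) hcj2).2) (by decide)
    rw [h1, h2]
  have H34 : u.filter (fun v => decide (v = 2 * (n + 3) ∨ v = 2 * (n + 4))) =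
      (wordWN n).filter (fun v => decide (v = 2 * (n + 3) ∨ v = 2 * (n + 4))) := by
    have hcj1 : sInB n (n + 1) (n + 3) := by unfold sInB; omega
    have hcj2 : sInB n (n + 1) (n + 4) := by unfold sInB; omega
    have e1 : sig2b n (2 * (n + 3)) = [0, 1, 0, 2] := by simp [sig2b]
    have e2 : sig2b n (2 * (n + 4)) = [3, 2] := by
      unfold sig2b; rw [if_neg (by omega), if_pos rfl]
    have hbad : sig2b n (2 * (n + 4)) ++ sig2b n (2 * (n + 3)) ≠ [0, 1, 0, 2, 3, 2] := by
      rw [e1, e2]; simp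
    have hufm : u.flatMap (sig2b n) = [0, 1, 0, 2, 3, 2] :=
      KEY (sig2b n) (w_fm_2b n)
        (s_fm_ne _ _ (2 * (n + 3)) (MEM (n + 1) (n + 3) (by omega) hcj1).2
          (by rw [e1]; simp))
    have h1 := s_samepair (sig2b n) (2 * (n + 3)) (2 * (n + 4)) (by omega)
      (fun v h1 h2 => sig2b_nil n v h1 h2) u hufm
      (CNT (n + 1) (n + 3) (by omega) hcj1).2 (CNT (n + 1) (n + 4) (by omega) hcj2).2 hbad
    have h2 := s_samepair (sig2b n) (2 * (n + 3)) (2 * (n + 4)) (by omega)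
      (fun v h1 h2 => sig2b_nil n v h1 h2) (wordWN n) (w_fm_2b n)
      (by rw [← COUNT]; exact (CNT (n + 1) (n + 3) (by omega) hcj1).2)
      (by rw [← COUNT]; exact (CNT (n + 1) (n + 4) (by omega) hcj2).2) hbad
    rw [h1, h2]
  -- all pairs
  have PAIRS : ∀ a b, u.filter (fun v => decide (v = a ∨ v = b)) =
      (wordWN n).filter (fun v => decide (v = a ∨ v = b)) := by
    intro a b
    by_cases hab : a = b
    · subst hab
      have e : ∀ l : List ℕ, l.filter (fun v => decide (v = a ∨ v = a)) =
          l.filter (fun v => decide (v = a)) :=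
        fun l => List.filter_congr (fun x _ => by simp)
      rw [e u, e (wordWN n)]
      exact SING a
    · by_cases haw : a ∈ wordWN n
      · by_cases hbw : b ∈ wordWN n
        · obtain ⟨ca, ja, hca, hcja, hfa⟩ := s_memw n a haw
          obtain ⟨cb, jb, hcb, hcjb, hfb⟩ := s_memw n b hbw
          rcases Nat.lt_trichotomy ca cb with hlt | heq | hgt
          · exact HLT a b ca ja cb jb hlt hcb hcja hcjb hfa hfb
          · subst heq
            rcases hfa with rfl | rfl <;> rcases hfb with rfl | rfl
            · exact absurd rfl hab
            · exact HYX ca jb hca hcjb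
            · rw [hcomm u, hcomm (wordWN n)]
              exact HYX ca ja hca hcja
            · have hcase : (ca = 0 ∧ ((ja = 1 ∧ jb = 2) ∨ (ja = 2 ∧ jb = 1))) ∨
                  (ca = n + 1 ∧ ((ja = n + 3 ∧ jb = n + 4) ∨ (ja = n + 4 ∧ jb = n + 3))) := by
                unfold sInB at hcja hcjb
                omega
              rcases hcase with ⟨_, ⟨rfl, rfl⟩ | ⟨rfl, rfl⟩⟩ | ⟨_, ⟨rfl, rfl⟩ | ⟨rfl, rfl⟩⟩
              · exact H12
              · rw [hcomm u, hcomm (wordWN n)]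
                exact H12
              · exact H34
              · rw [hcomm u, hcomm (wordWN n)]
                exact H34
          · rw [hcomm u, hcomm (wordWN n)]
            exact HLT b a cb jb ca ja hgt hca hcjb hcja hfb hfa
        · have hbu : b ∉ u := fun h => hbw (hsub b h)
          have e1 : u.filter (fun v => decide (v = a ∨ v = b)) =
              u.filter (fun v => decide (v = a)) :=
            List.filter_congr (fun x hx => decide_eq_decide.mpr
              ⟨fun h => by rcases h with rfl | rfl; exacts [rfl, absurd hx hbu], Or.inl⟩)
          have e2 : (wordWN n).filter (fun v => decide (v = a ∨ v = b)) =
              (wordWN n).filter (fun v => decide (v = a)) :=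
            List.filter_congr (fun x hx => decide_eq_decide.mpr
              ⟨fun h => by rcases h with rfl | rfl; exacts [rfl, absurd hx hbw], Or.inl⟩)
          rw [e1, e2]
          exact SING a
      · have hau : a ∉ u := fun h => haw (hsub a h)
        have e1 : u.filter (fun v => decide (v = a ∨ v = b)) =
            u.filter (fun v => decide (v = b)) :=
          List.filter_congr (fun x hx => decide_eq_decide.mpr
            ⟨fun h => by rcases h with rfl | rfl; exacts [absurd hx hau, rfl], Or.inr⟩)
        have e2 : (wordWN n).filter (fun v => decide (v = a ∨ v = b)) =
            (wordWN n).filter (fun v => decide (v = b)) :=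
          List.filter_congr (fun x hx => decide_eq_decide.mpr
            ⟨fun h => by rcases h with rfl | rfl; exacts [absurd hx haw, rfl], Or.inr⟩)
        rw [e1, e2]
        exact SING b
  exact s_pairproj u (wordWN n) PAIRS
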